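/- Let F be the free group on x_1, …, x_{n-1}, m_1, …, m_g, l_1, …, l_g, and for k ≥ 1 define the map 𝔭_k : (F_k/F_{k+1})^{2g+n-1} → F_{k+1}/F_{k+2} by (α_1,…,α_{n-1},β_1,…,β_g,γ_1,…,γ_g) ↦ ∏_{i=1}^{n-1}[x_i,α_i] · ∏_{j=1}^{g}[m_j,γ_j][β_j,l_j]. Then 𝔭_k is a well-defined surjective group homomorphism. -/

import Mathlib

/-- `lcs G k` is the `k`-th term `G_k` of the lower central series, 1-indexed:
`G_1 = G`, `G_{k+1} = [G, G_k]`. -/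
def lcs (G : Type*) [Group G] (k : ℕ) : Subgroup G := (⊤ : Subgroup G).lowerCentralSeries (k - 1)

instance lcs_normal (G : Type*) [Group G] (k : ℕ) : (lcs G k).Normal :=
  (inferInstance : ((⊤ : Subgroup G).lowerCentralSeries (k - 1)).Normal)

lemma lcs_antitone {G : Type*} [Group G] {k l : ℕ} (h : k ≤ l) : lcs G l ≤ lcs G k :=
  Subgroup.lowerCentralSeries_antitone ⊤ (Nat.sub_le_sub_right h 1)

/-- The natural projection `G/G_l → G/G_k` for `k ≤ l`. -/
def lcsProj (G : Type*) [Group G] (l k : ℕ) (h : k ≤ l) :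
    G ⧸ lcs G l →* G ⧸ lcs G k :=
  QuotientGroup.map _ _ (MonoidHom.id G) (fun _ hx => lcs_antitone h hx)
/-- The commutator used in the paper: `[x,y] = x⁻¹y⁻¹xy`. -/
def pcomm {G : Type*} [Group G] (x y : G) : G := x⁻¹ * y⁻¹ * x * y

/-- The free group on `x_1,…,x_{n-1}, m_1,…,m_g, l_1,…,l_g`. -/
abbrev FG (n g : ℕ) := FreeGroup (Fin (n - 1) ⊕ (Fin g ⊕ Fin g))

def xgen {n g : ℕ} (i : Fin (n - 1)) : FG n g := FreeGroup.of (Sum.inl i)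
def mgen {n g : ℕ} (j : Fin g) : FG n g := FreeGroup.of (Sum.inr (Sum.inl j))
def lgen {n g : ℕ} (j : Fin g) : FG n g := FreeGroup.of (Sum.inr (Sum.inr j))

/-- The element `∏ᵢ [x_i, α_i] · ∏ⱼ [m_j, γ_j][β_j, l_j]` representing
`𝔭_k(α₁,…,α_{n-1},β₁,…,β_g,γ₁,…,γ_g)`. -/
def pk {n g : ℕ} (α : Fin (n - 1) → FG n g) (β γ : Fin g → FG n g) : FG n g :=
  ((List.finRange (n - 1)).map (fun i => pcomm (xgen i) (α i))).prod *
  ((List.finRange g).map (fun j => pcomm (mgen j) (γ j) * pcomm (β j) (lgen j))).prod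

/-! Modulo `F_{k+2}`, a commutator `[x, a]` with `a ∈ F_k` lies in `F_{k+1}` and is therefore
central, so the identities `[x, ab] = [x, b] · b⁻¹[x, a]b` and `[ab, y] = b⁻¹[a, y]b · [b, y]`
make it multiplicative in each argument. Hence `𝔭_k` is a product of homomorphisms into the
abelian group `Z(F/F_{k+2})`, and it kills tuples from `F_{k+1}` since their image lies in
`F_{k+2}`. For surjectivity, `F_{k+1} = [F_k, F]` is generated by the `[a, y]` with `a ∈ F_k`,
and `y ↦ [a, y]` is a homomorphism on `F`, so it suffices to reach `[a, y]` for `y` a free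
generator: up to inversion, that is `𝔭_k` of a tuple with a single nontrivial entry. -/

open scoped commutatorElement IsMulCommutative

section LowerCentralSeries

variable {G : Type*} [Group G] {k : ℕ}

lemma lcs_succ_eq_commutator (hk : 1 ≤ k) : lcs G (k + 1) = ⁅lcs G k, ⊤⁆ := by
  obtain ⟨m, rfl⟩ := Nat.exists_eq_add_of_le' hk
  rfl

lemma commutatorElement_mem_lcs_succ {a : G} (ha : a ∈ lcs G k) (x : G) :
    ⁅a, x⁆ ∈ lcs G (k + 1) := by
  rcases Nat.eq_zero_or_pos k with rfl | hk
  · exact Subgroup.mem_top _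
  · rw [lcs_succ_eq_commutator hk]
    exact Subgroup.commutator_mem_commutator ha (Subgroup.mem_top x)

lemma pcomm_eq_commutatorElement (x y : G) : pcomm x y = ⁅x⁻¹, y⁻¹⁆ := by
  simp [pcomm, commutatorElement_def]

lemma inv_pcomm (x y : G) : (pcomm x y)⁻¹ = pcomm y x := by
  simp [pcomm, mul_assoc]

lemma pcomm_mem_lcs_succ_left {a : G} (ha : a ∈ lcs G k) (y : G) :
    pcomm a y ∈ lcs G (k + 1) := by
  rw [pcomm_eq_commutatorElement]
  exact commutatorElement_mem_lcs_succ (inv_mem ha) y⁻¹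

lemma pcomm_mem_lcs_succ_right (x : G) {a : G} (ha : a ∈ lcs G k) :
    pcomm x a ∈ lcs G (k + 1) := by
  rw [← inv_mem_iff, inv_pcomm]
  exact pcomm_mem_lcs_succ_left ha x

lemma mk_mem_center_of_mem_lcs_succ {z : G} (hz : z ∈ lcs G (k + 1)) :
    (z : G ⧸ lcs G (k + 2)) ∈ Subgroup.center (G ⧸ lcs G (k + 2)) := by
  rw [Subgroup.mem_center_iff]
  intro w
  induction w using QuotientGroup.induction_on with | _ u => ?_
  rw [← QuotientGroup.mk_mul, ← QuotientGroup.mk_mul, QuotientGroup.eq]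
  convert commutatorElement_mem_lcs_succ (inv_mem hz) u⁻¹ using 1
  simp [commutatorElement_def, mul_assoc]

lemma mk_conj_of_mem_lcs_succ {z : G} (hz : z ∈ lcs G (k + 1)) (w : G) :
    ((w⁻¹ * z * w : G) : G ⧸ lcs G (k + 2)) = (z : G) := by
  rw [QuotientGroup.mk_mul, QuotientGroup.mk_mul, QuotientGroup.mk_inv,
    Subgroup.mem_center_iff.mp (mk_mem_center_of_mem_lcs_succ hz), inv_mul_cancel_right]

lemma mk_pcomm_mul_right {x a : G} (h : pcomm x a ∈ lcs G (k + 1)) (b : G) :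
    ((pcomm x (a * b) : G) : G ⧸ lcs G (k + 2)) = (pcomm x a : G) * (pcomm x b : G) := by
  have hid : pcomm x (a * b) = pcomm x b * (b⁻¹ * pcomm x a * b) := by
    simp only [pcomm]; group
  rw [hid, QuotientGroup.mk_mul, mk_conj_of_mem_lcs_succ h,
    Subgroup.mem_center_iff.mp (mk_mem_center_of_mem_lcs_succ h)]

lemma mk_pcomm_mul_left {a y : G} (h : pcomm a y ∈ lcs G (k + 1)) (b : G) :
    ((pcomm (a * b) y : G) : G ⧸ lcs G (k + 2)) = (pcomm a y : G) * (pcomm b y : G) := by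
  have hid : pcomm (a * b) y = b⁻¹ * pcomm a y * b * pcomm b y := by
    simp only [pcomm]; group
  rw [hid, QuotientGroup.mk_mul, mk_conj_of_mem_lcs_succ h]

variable (k) in
def pcommRightHom (x : G) : lcs G k →* Subgroup.center (G ⧸ lcs G (k + 2)) :=
  MonoidHom.mk'
    (fun a => ⟨((pcomm x a : G) : G ⧸ lcs G (k + 2)),
      mk_mem_center_of_mem_lcs_succ (pcomm_mem_lcs_succ_right x a.2)⟩)
    (fun a _ => Subtype.ext (mk_pcomm_mul_right (pcomm_mem_lcs_succ_right x a.2) _))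

variable (k) in
def pcommLeftHom (y : G) : lcs G k →* Subgroup.center (G ⧸ lcs G (k + 2)) :=
  MonoidHom.mk'
    (fun a => ⟨((pcomm a y : G) : G ⧸ lcs G (k + 2)),
      mk_mem_center_of_mem_lcs_succ (pcomm_mem_lcs_succ_left a.2 y)⟩)
    (fun a _ => Subtype.ext (mk_pcomm_mul_left (pcomm_mem_lcs_succ_left a.2 y) _))

def pcommRightHomOfMem {a : G} (ha : a ∈ lcs G k) :
    G →* Subgroup.center (G ⧸ lcs G (k + 2)) :=
  MonoidHom.mk'
    (fun y => ⟨((pcomm a y : G) : G ⧸ lcs G (k + 2)),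
      mk_mem_center_of_mem_lcs_succ (pcomm_mem_lcs_succ_left ha y)⟩)
    (fun _ _ => Subtype.ext (mk_pcomm_mul_right (pcomm_mem_lcs_succ_left ha _) _))

end LowerCentralSeries

section SurfaceGroupMap

variable {n g k : ℕ}

lemma pk_mem_lcs_succ {α : Fin (n - 1) → FG n g} {β γ : Fin g → FG n g}
    (hα : ∀ i, α i ∈ lcs (FG n g) k) (hβ : ∀ j, β j ∈ lcs (FG n g) k)
    (hγ : ∀ j, γ j ∈ lcs (FG n g) k) : pk α β γ ∈ lcs (FG n g) (k + 1) := by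
  refine mul_mem (Subgroup.list_prod_mem _ ?_) (Subgroup.list_prod_mem _ ?_) <;>
    simp only [List.mem_map, List.mem_finRange, true_and, forall_exists_index]
  · rintro _ i rfl
    exact pcomm_mem_lcs_succ_right _ (hα i)
  · rintro _ j rfl
    exact mul_mem (pcomm_mem_lcs_succ_right _ (hγ j)) (pcomm_mem_lcs_succ_left (hβ j) _)

variable (n g k) in
abbrev PkDomain :=
  (Fin (n - 1) → lcs (FG n g) k) × (Fin g → lcs (FG n g) k) × (Fin g → lcs (FG n g) k)

variable (n g k) in
def pkHom : PkDomain n g k →* Subgroup.center (FG n g ⧸ lcs (FG n g) (k + 2)) where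
  toFun t := (∏ i, pcommRightHom k (xgen i) (t.1 i)) *
    ∏ j, pcommRightHom k (mgen j) (t.2.2 j) * pcommLeftHom k (lgen j) (t.2.1 j)
  map_one' := by simp
  map_mul' s t := by
    simp only [Prod.fst_mul, Prod.snd_mul, Pi.mul_apply, map_mul, Finset.prod_mul_distrib]
    ac_rfl

lemma mk_pk_eq_pkHom {α : Fin (n - 1) → FG n g} {β γ : Fin g → FG n g}
    (hα : ∀ i, α i ∈ lcs (FG n g) k) (hβ : ∀ j, β j ∈ lcs (FG n g) k)
    (hγ : ∀ j, γ j ∈ lcs (FG n g) k) :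
    (pk α β γ : FG n g ⧸ lcs (FG n g) (k + 2)) =
      pkHom n g k (fun i => ⟨α i, hα i⟩, fun j => ⟨β j, hβ j⟩, fun j => ⟨γ j, hγ j⟩) := by
  rw [pk, QuotientGroup.mk_mul]
  simp only [pkHom, MonoidHom.coe_mk, OneHom.coe_mk, Subgroup.coe_mul, Fin.prod_univ_def,
    Subgroup.val_list_prod, List.map_map]
  congr 1 <;> exact (map_list_prod (QuotientGroup.mk' _) _).trans
    (by simp [Function.comp_def, pcommRightHom, pcommLeftHom])

lemma mk_pk_mul {α α' : Fin (n - 1) → FG n g} {β β' γ γ' : Fin g → FG n g}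
    (hα : ∀ i, α i ∈ lcs (FG n g) k) (hβ : ∀ j, β j ∈ lcs (FG n g) k)
    (hγ : ∀ j, γ j ∈ lcs (FG n g) k) (hα' : ∀ i, α' i ∈ lcs (FG n g) k)
    (hβ' : ∀ j, β' j ∈ lcs (FG n g) k) (hγ' : ∀ j, γ' j ∈ lcs (FG n g) k) :
    (pk (fun i => α i * α' i) (fun j => β j * β' j) (fun j => γ j * γ' j) :
        FG n g ⧸ lcs (FG n g) (k + 2)) = (pk α β γ : FG n g) * (pk α' β' γ' : FG n g) := by
  rw [mk_pk_eq_pkHom hα hβ hγ, mk_pk_eq_pkHom hα' hβ' hγ',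
    mk_pk_eq_pkHom (fun i => mul_mem (hα i) (hα' i)) (fun j => mul_mem (hβ j) (hβ' j))
      (fun j => mul_mem (hγ j) (hγ' j)), ← Subgroup.coe_mul, ← map_mul]
  rfl

lemma mk_pk_eq_of_inv_mul_mem {α α' : Fin (n - 1) → FG n g} {β β' γ γ' : Fin g → FG n g}
    (hα : ∀ i, α i ∈ lcs (FG n g) k) (hβ : ∀ j, β j ∈ lcs (FG n g) k)
    (hγ : ∀ j, γ j ∈ lcs (FG n g) k) (dα : ∀ i, (α i)⁻¹ * α' i ∈ lcs (FG n g) (k + 1))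
    (dβ : ∀ j, (β j)⁻¹ * β' j ∈ lcs (FG n g) (k + 1))
    (dγ : ∀ j, (γ j)⁻¹ * γ' j ∈ lcs (FG n g) (k + 1)) :
    (pk α β γ : FG n g ⧸ lcs (FG n g) (k + 2)) = (pk α' β' γ' : FG n g) := by
  have hδ : (pk (fun i => (α i)⁻¹ * α' i) (fun j => (β j)⁻¹ * β' j) (fun j => (γ j)⁻¹ * γ' j) :
      FG n g ⧸ lcs (FG n g) (k + 2)) = 1 :=
    (QuotientGroup.eq_one_iff _).2 (pk_mem_lcs_succ dα dβ dγ)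
  have hsplit := mk_pk_mul hα hβ hγ (fun i => lcs_antitone k.le_succ (dα i))
    (fun j => lcs_antitone k.le_succ (dβ j)) (fun j => lcs_antitone k.le_succ (dγ j))
  simp only [mul_inv_cancel_left] at hsplit
  rw [hsplit, hδ, mul_one]

lemma pkHom_mulSingle_x (i : Fin (n - 1)) (a : lcs (FG n g) k) :
    pkHom n g k (Pi.mulSingle i a, 1, 1) = pcommRightHom k (xgen i) a := by
  simp [pkHom, Pi.mulSingle_apply, apply_ite]

lemma pkHom_mulSingle_l (j : Fin g) (b : lcs (FG n g) k) :
    pkHom n g k (1, Pi.mulSingle j b, 1) = pcommLeftHom k (lgen j) b := by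
  simp [pkHom, Pi.mulSingle_apply, apply_ite]

lemma pkHom_mulSingle_m (j : Fin g) (c : lcs (FG n g) k) :
    pkHom n g k (1, 1, Pi.mulSingle j c) = pcommRightHom k (mgen j) c := by
  simp [pkHom, Pi.mulSingle_apply, apply_ite]

lemma pcommRightHomOfMem_mem_range_pkHom {a : FG n g} (ha : a ∈ lcs (FG n g) k)
    (y : FG n g) : pcommRightHomOfMem ha y ∈ (pkHom n g k).range := by
  suffices h : ⊤ ≤ (pkHom n g k).range.comap (pcommRightHomOfMem ha) from h trivial
  rw [← FreeGroup.closure_range_of, Subgroup.closure_le]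
  rintro _ ⟨i | j | j, rfl⟩ <;> rw [SetLike.mem_coe, Subgroup.mem_comap]
  · rw [← inv_mem_iff]
    refine ⟨(Pi.mulSingle i ⟨a, ha⟩, 1, 1), ?_⟩
    ext
    simp only [pkHom_mulSingle_x, pcommRightHom, pcommRightHomOfMem, xgen, MonoidHom.mk'_apply,
      InvMemClass.coe_inv]
    rw [← QuotientGroup.mk_inv, inv_pcomm]
  · rw [← inv_mem_iff]
    refine ⟨(1, 1, Pi.mulSingle j ⟨a, ha⟩), ?_⟩
    ext
    simp only [pkHom_mulSingle_m, pcommRightHom, pcommRightHomOfMem, mgen, MonoidHom.mk'_apply,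
      InvMemClass.coe_inv]
    rw [← QuotientGroup.mk_inv, inv_pcomm]
  · refine ⟨(1, Pi.mulSingle j ⟨a, ha⟩, 1), ?_⟩
    ext
    simp [pkHom_mulSingle_l, pcommLeftHom, pcommRightHomOfMem, lgen]

lemma exists_pkHom_eq_mk (hk : 1 ≤ k) {z : FG n g} (hz : z ∈ lcs (FG n g) (k + 1)) :
    ∃ t, (pkHom n g k t : FG n g ⧸ lcs (FG n g) (k + 2)) = z := by
  suffices h : lcs (FG n g) (k + 1) ≤ ((pkHom n g k).range.map (Subgroup.center _).subtype).comap
      (QuotientGroup.mk' _) by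
    obtain ⟨_, ⟨t, rfl⟩, ht⟩ := h hz
    exact ⟨t, ht⟩
  rw [lcs_succ_eq_commutator hk, Subgroup.commutator_le]
  intro p hp q _
  obtain ⟨t, ht⟩ := pcommRightHomOfMem_mem_range_pkHom (inv_mem hp) q⁻¹
  refine ⟨_, ⟨t, rfl⟩, ?_⟩
  simp only [Subgroup.coe_subtype, QuotientGroup.mk'_apply, ht, pcommRightHomOfMem,
    MonoidHom.mk'_apply, pcomm_eq_commutatorElement, inv_inv]

end SurfaceGroupMap

/-- `𝔭_k : (F_k/F_{k+1})^{2g+n-1} → F_{k+1}/F_{k+2}` is a well-defined surjective group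
homomorphism: on representatives in `F_k` its value lies in `F_{k+1}`, the class of the
value mod `F_{k+2}` depends only on the classes of the arguments mod `F_{k+1}`, it is
additive, and every class in `F_{k+1}/F_{k+2}` is attained. -/
theorem stmt11 (n g k : ℕ) (hk : 1 ≤ k) :
    -- lands in F_{k+1}
    (∀ (α : Fin (n - 1) → FG n g) (β γ : Fin g → FG n g),
      (∀ i, α i ∈ lcs (FG n g) k) → (∀ j, β j ∈ lcs (FG n g) k) →
      (∀ j, γ j ∈ lcs (FG n g) k) → pk α β γ ∈ lcs (FG n g) (k + 1)) ∧
    -- well-definedness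
    (∀ (α α' : Fin (n - 1) → FG n g) (β β' γ γ' : Fin g → FG n g),
      (∀ i, α i ∈ lcs (FG n g) k) → (∀ j, β j ∈ lcs (FG n g) k) →
      (∀ j, γ j ∈ lcs (FG n g) k) →
      (∀ i, (α i)⁻¹ * α' i ∈ lcs (FG n g) (k + 1)) →
      (∀ j, (β j)⁻¹ * β' j ∈ lcs (FG n g) (k + 1)) →
      (∀ j, (γ j)⁻¹ * γ' j ∈ lcs (FG n g) (k + 1)) →
      (pk α β γ)⁻¹ * pk α' β' γ' ∈ lcs (FG n g) (k + 2)) ∧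
    -- homomorphism
    (∀ (α α' : Fin (n - 1) → FG n g) (β β' γ γ' : Fin g → FG n g),
      (∀ i, α i ∈ lcs (FG n g) k) → (∀ j, β j ∈ lcs (FG n g) k) →
      (∀ j, γ j ∈ lcs (FG n g) k) →
      (∀ i, α' i ∈ lcs (FG n g) k) → (∀ j, β' j ∈ lcs (FG n g) k) →
      (∀ j, γ' j ∈ lcs (FG n g) k) →
      (pk (fun i => α i * α' i) (fun j => β j * β' j) (fun j => γ j * γ' j))⁻¹ *
        (pk α β γ * pk α' β' γ') ∈ lcs (FG n g) (k + 2)) ∧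
    -- surjectivity
    (∀ z ∈ lcs (FG n g) (k + 1), ∃ (α : Fin (n - 1) → FG n g) (β γ : Fin g → FG n g),
      (∀ i, α i ∈ lcs (FG n g) k) ∧ (∀ j, β j ∈ lcs (FG n g) k) ∧
      (∀ j, γ j ∈ lcs (FG n g) k) ∧ z⁻¹ * pk α β γ ∈ lcs (FG n g) (k + 2)) := by
  refine ⟨fun _ _ _ => pk_mem_lcs_succ, ?_, ?_, ?_⟩
  · intro α α' β β' γ γ' hα hβ hγ dα dβ dγ
    exact QuotientGroup.eq.mp (mk_pk_eq_of_inv_mul_mem hα hβ hγ dα dβ dγ)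
  · intro α α' β β' γ γ' hα hβ hγ hα' hβ' hγ'
    rw [← QuotientGroup.eq, QuotientGroup.mk_mul]
    exact mk_pk_mul hα hβ hγ hα' hβ' hγ'
  · intro z hz
    obtain ⟨t, ht⟩ := exists_pkHom_eq_mk hk hz
    refine ⟨fun i => t.1 i, fun j => t.2.1 j, fun j => t.2.2 j, fun i => (t.1 i).2,
      fun j => (t.2.1 j).2, fun j => (t.2.2 j).2, QuotientGroup.eq.mp ?_⟩
    rw [mk_pk_eq_pkHom (fun i => (t.1 i).2) (fun j => (t.2.1 j).2) (fun j => (t.2.2 j).2)]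
    exact ht.symm
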